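/- arXiv:1811.11305 — 4 statements merged into one kernel-verified Lean document; each statement's English description precedes it below -/
import Mathlib

section
/- Let a and b be nonzero integers, n a positive integer such that aj + b ≠ 0 for every integer j with 1 ≤ j ≤ n, and k a positive integer. Then ∑_{j=1}^{n} 1/(aj+b)^{2k} = -1/(2b^{2k}) + 1/(2(an+b)^{2k}) - ((-1)^{k}(2π)^{2k}/2) ∫_{0}^{1} [ ∑_{j=0}^{k} B_{2j}(2-2^{2j})(1-u)^{2k-2j}/((2j)!(2k-2j)!) ]·( sin(2π(an+b)u) - sin(2πbu) )·cot(πau) du. -/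
/-!
Write `P_k` for the polynomial in the integrand. Its derivative `Q_k` satisfies `Q_k' = P_{k-1}`,
`Q_k(1) = 0` and `Q_k(0) = -[k = 1]`, the last by a binomial identity for Bernoulli numbers. If
`sin c = 0 ≠ c`, integrating `∫₀¹ P_k(u) cos(cu) du` by parts twice therefore relates it to the
same integral for `P_{k-1}`, and gives `(-1)^(k+1) / c^(2k)`.

Away from the null set where `sin(πau) = 0`, the identity
`(sin(x + 2t) - sin x) cot t = cos(x + 2t) + cos x` telescopes the integrand into
`∑_{j<n} P_k(u) (cos(2π m_{j+1} u) + cos(2π m_j u))` with `m_j = aj + b`. Each of these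
integrals is `(-1)^(k+1) / (2π m_j)^(2k)`, and summing them gives the theorem.
-/

open Real Finset Nat

theorem Finset.sum_range_two_mul {M : Type*} [AddCommMonoid M] (f : ℕ → M) (k : ℕ) :
    ∑ i ∈ range (2 * k), f i = ∑ j ∈ range k, (f (2 * j) + f (2 * j + 1)) := by
  induction k with
  | zero => simp
  | succ k ih =>
    rw [show 2 * (k + 1) = 2 * k + 1 + 1 by ring, sum_range_succ, sum_range_succ, ih,
      sum_range_succ, add_assoc]

theorem sum_choose_mul_two_pow_mul_bernoulli_of_odd {m : ℕ} (hm : Odd m) :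
    ∑ i ∈ range (m + 1), (m.choose i : ℚ) * 2 ^ i * bernoulli i = 0 := by
  -- the sum is `2 ^ m * B_m(1/2)`, and `B_m(1 - x) = (-1) ^ m * B_m(x)`
  have half : (Polynomial.bernoulli m).eval (1 / 2 : ℚ) = 0 := by
    have h := Polynomial.bernoulli_eval_one_sub m (1 / 2)
    rw [hm.neg_one_pow] at h
    norm_num at h
    linarith
  rw [Polynomial.bernoulli, Polynomial.eval_finsetSum] at half
  rw [← mul_eq_zero_of_right ((2 : ℚ) ^ m) half, mul_sum]
  refine sum_congr rfl fun i hi => ?_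
  rw [Polynomial.eval_monomial, ← Nat.sub_add_cancel (Nat.lt_succ_iff.mp (mem_range.mp hi))]
  simp only [Nat.add_sub_cancel, pow_add, one_div, inv_pow]
  field_simp

theorem sum_choose_mul_two_sub_two_pow_mul_bernoulli (k : ℕ) :
    ∑ j ∈ range (k + 1), ((2 * k + 1).choose (2 * j) : ℚ) * (2 - 2 ^ (2 * j)) * bernoulli (2 * j)
      = if k = 0 then 1 else 0 := by
  set f : ℕ → ℚ := fun i => ((2 * k + 1).choose i : ℚ) * (2 - 2 ^ i) * bernoulli i
  have odd_terms : ∀ j, f (2 * j + 1) = 0 := by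
    rintro (_ | j)
    · simp [f]
    · simp [f, bernoulli_eq_zero_of_odd (odd_two_mul_add_one (j + 1)) (by omega)]
  have all_terms : ∑ i ∈ range (2 * k + 2), f i
      = 2 * ∑ i ∈ range (2 * k + 2), ((2 * k + 1).choose i : ℚ) * bernoulli i
        - ∑ i ∈ range (2 * k + 2), ((2 * k + 1).choose i : ℚ) * 2 ^ i * bernoulli i := by
    rw [mul_sum, ← sum_sub_distrib]
    exact sum_congr rfl fun i _ => by ring
  have even_terms := Finset.sum_range_two_mul f (k + 1)
  simp only [odd_terms, add_zero, show 2 * (k + 1) = 2 * k + 2 by ring] at even_terms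
  rw [← even_terms, all_terms, sum_choose_mul_two_pow_mul_bernoulli_of_odd (odd_two_mul_add_one k),
    sum_range_succ _ (2 * k + 1), sum_bernoulli, Nat.choose_self]
  rcases Nat.eq_zero_or_pos k with rfl | hk
  · norm_num
  · simp [bernoulli_eq_zero_of_odd (odd_two_mul_add_one k) (by omega), hk.ne']

/-- Since `(2 - 2 ^ (2 * j)) * B_{2j} = 2 ^ (2 * j) * B_{2j}(1/2)`, this is
`2 ^ (2 * k) * B_{2k}(u / 2) / (2 * k)!`. -/
noncomputable def bernoulliKernel (k : ℕ) (u : ℝ) : ℝ :=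
  ∑ j ∈ range (k + 1),
    (bernoulli (2 * j) : ℝ) * (2 - 2 ^ (2 * j)) * (1 - u) ^ (2 * k - 2 * j) /
      ((2 * j)! * (2 * k - 2 * j)!)

noncomputable def bernoulliKernelDeriv (k : ℕ) (u : ℝ) : ℝ :=
  -∑ j ∈ range k,
    (bernoulli (2 * j) : ℝ) * (2 - 2 ^ (2 * j)) * (1 - u) ^ (2 * k - 2 * j - 1) /
      ((2 * j)! * (2 * k - 2 * j - 1)!)

theorem hasDerivAt_one_sub_pow_succ_div_factorial (e : ℕ) (u : ℝ) :
    HasDerivAt (fun x : ℝ => (1 - x) ^ (e + 1) / (e + 1)!) (-((1 - u) ^ e / e !)) u := by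
  refine ((((hasDerivAt_id u).const_sub 1).pow (e + 1)).div_const _).congr_deriv ?_
  push_cast [Nat.factorial_succ]
  field_simp
  simp

theorem hasDerivAt_bernoulliKernel (k : ℕ) (u : ℝ) :
    HasDerivAt (bernoulliKernel k) (bernoulliKernelDeriv k u) u := by
  have split_top : bernoulliKernel k = fun x => ∑ j ∈ range k,
      (bernoulli (2 * j) : ℝ) * (2 - 2 ^ (2 * j)) * (1 - x) ^ (2 * k - 2 * j) /
        ((2 * j)! * (2 * k - 2 * j)!) + bernoulli (2 * k) * (2 - 2 ^ (2 * k)) / (2 * k)! := by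
    funext x
    simp [bernoulliKernel, sum_range_succ]
  rw [split_top, bernoulliKernelDeriv, ← sum_neg_distrib]
  refine (HasDerivAt.fun_sum fun j hj => ?_).add_const _
  obtain ⟨e, he⟩ : ∃ e, 2 * k - 2 * j = e + 1 := ⟨2 * k - 2 * j - 1, by grind⟩
  rw [he, Nat.add_sub_cancel]
  exact (((hasDerivAt_one_sub_pow_succ_div_factorial e u).const_mul
    ((bernoulli (2 * j) : ℝ) * (2 - 2 ^ (2 * j)) / (2 * j)!)).congr_of_eventuallyEq
    (.of_forall fun x => by ring)).congr_deriv (by ring)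

theorem hasDerivAt_bernoulliKernelDeriv (k : ℕ) (u : ℝ) :
    HasDerivAt (bernoulliKernelDeriv (k + 1)) (bernoulliKernel k u) u := by
  have deriv_def : bernoulliKernelDeriv (k + 1) = fun x => ∑ j ∈ range (k + 1),
      -((bernoulli (2 * j) : ℝ) * (2 - 2 ^ (2 * j)) * (1 - x) ^ (2 * k - 2 * j + 1) /
        ((2 * j)! * (2 * k - 2 * j + 1)!)) := by
    funext x
    rw [bernoulliKernelDeriv, ← sum_neg_distrib]
    refine sum_congr rfl fun j hj => ?_
    rw [show 2 * (k + 1) - 2 * j - 1 = 2 * k - 2 * j + 1 by grind]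
  rw [deriv_def, bernoulliKernel]
  refine HasDerivAt.fun_sum fun j _ => ?_
  exact (((hasDerivAt_one_sub_pow_succ_div_factorial (2 * k - 2 * j) u).const_mul
    (-(bernoulli (2 * j) : ℝ) * (2 - 2 ^ (2 * j)) / (2 * j)!)).congr_of_eventuallyEq
    (.of_forall fun x => by ring)).congr_deriv (by ring)

theorem bernoulliKernelDeriv_succ_one (k : ℕ) : bernoulliKernelDeriv (k + 1) 1 = 0 := by
  rw [bernoulliKernelDeriv, neg_eq_zero]
  exact sum_eq_zero fun j hj => by rw [sub_self, zero_pow (by grind)]; simp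

theorem bernoulliKernelDeriv_succ_zero (k : ℕ) :
    bernoulliKernelDeriv (k + 1) 0 = -if k = 0 then 1 else 0 := by
  have hfac : ((2 * k + 1)! : ℝ) ≠ 0 := by positivity
  have scaled : ((2 * k + 1)! : ℝ) * ∑ j ∈ range (k + 1),
      (bernoulli (2 * j) : ℝ) * (2 - 2 ^ (2 * j)) * (1 - 0) ^ (2 * (k + 1) - 2 * j - 1) /
        ((2 * j)! * (2 * (k + 1) - 2 * j - 1)!)
      = ∑ j ∈ range (k + 1),
          ((2 * k + 1).choose (2 * j) : ℝ) * (2 - 2 ^ (2 * j)) * bernoulli (2 * j) := by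
    rw [mul_sum]
    refine sum_congr rfl fun j hj => ?_
    have hle : 2 * j ≤ 2 * k + 1 := by grind
    rw [show 2 * (k + 1) - 2 * j - 1 = 2 * k + 1 - 2 * j by omega,
      ← Nat.choose_mul_factorial_mul_factorial hle, sub_zero, one_pow]
    push_cast
    field_simp
  have identity := congrArg (Rat.cast : ℚ → ℝ) (sum_choose_mul_two_sub_two_pow_mul_bernoulli k)
  push_cast at identity
  rw [bernoulliKernelDeriv, neg_inj]
  refine mul_left_cancel₀ hfac (scaled.trans (identity.trans ?_))
  split_ifs with hk <;> simp [hk]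

theorem integral_mul_cos_eq_of_hasDerivAt {f f' f'' : ℝ → ℝ} {c : ℝ}
    (hf : ∀ x, HasDerivAt f (f' x) x) (hf' : ∀ x, HasDerivAt f' (f'' x) x)
    (hf'' : Continuous f'') (hc : c ≠ 0) (hsin : sin c = 0) (hf'_one : f' 1 = 0) :
    ∫ u in (0 : ℝ)..1, f u * cos (c * u)
      = -(f' 0 + ∫ u in (0 : ℝ)..1, f'' u * cos (c * u)) / c ^ 2 := by
  have hf'_cont : Continuous f' := continuous_iff_continuousAt.2 fun x => (hf' x).continuousAt
  have sin_div : ∀ x, HasDerivAt (fun t => sin (c * t) / c) (cos (c * x)) x := fun x => by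
    simpa [hc] using (((hasDerivAt_id x).const_mul c).sin.div_const c)
  have neg_cos_div : ∀ x, HasDerivAt (fun t => -cos (c * t) / c) (sin (c * x)) x := fun x => by
    simpa [hc] using (((hasDerivAt_id x).const_mul c).cos.neg.div_const c)
  have first := intervalIntegral.integral_mul_deriv_eq_deriv_mul (fun x _ => hf x)
    (fun x _ => sin_div x) (hf'_cont.intervalIntegrable 0 1)
    (Continuous.intervalIntegrable (by fun_prop) 0 1)
  have second := intervalIntegral.integral_mul_deriv_eq_deriv_mul (fun x _ => hf' x)
    (fun x _ => neg_cos_div x) (hf''.intervalIntegrable 0 1)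
    (Continuous.intervalIntegrable (by fun_prop) 0 1)
  simp only [mul_div_assoc', mul_neg, neg_div, intervalIntegral.integral_neg,
    intervalIntegral.integral_div] at first second
  rw [first, second]
  simp only [mul_one, hsin, mul_zero, zero_div, sin_zero, sub_self, hf'_one, zero_mul, neg_zero,
    cos_zero, sub_neg_eq_add, zero_add, zero_sub, neg_add_rev]
  field_simp
  ring

theorem continuous_bernoulliKernel (k : ℕ) : Continuous (bernoulliKernel k) :=
  continuous_iff_continuousAt.2 fun x => (hasDerivAt_bernoulliKernel k x).continuousAt

theorem integral_bernoulliKernel_mul_cos {c : ℝ} (hc : c ≠ 0) (hsin : sin c = 0) {k : ℕ}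
    (hk : 0 < k) :
    ∫ u in (0 : ℝ)..1, bernoulliKernel k u * cos (c * u) = (-1) ^ (k + 1) / c ^ (2 * k) := by
  have step : ∀ k, ∫ u in (0 : ℝ)..1, bernoulliKernel (k + 1) u * cos (c * u)
      = -(bernoulliKernelDeriv (k + 1) 0 + ∫ u in (0 : ℝ)..1, bernoulliKernel k u * cos (c * u))
        / c ^ 2 := fun k =>
    integral_mul_cos_eq_of_hasDerivAt (hasDerivAt_bernoulliKernel _)
      (hasDerivAt_bernoulliKernelDeriv k) (continuous_bernoulliKernel k) hc hsin
      (bernoulliKernelDeriv_succ_one k)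
  induction k, hk using Nat.le_induction with
  | base =>
    have integral_cos : ∫ u in (0 : ℝ)..1, cos (c * u) = 0 := by
      simp [intervalIntegral.integral_comp_mul_left (fun x => cos x) hc, hsin]
    have kernel_zero : ∀ u, bernoulliKernel 0 u = 1 := fun u => by norm_num [bernoulliKernel]
    rw [step 0, bernoulliKernelDeriv_succ_zero]
    simp only [kernel_zero, one_mul, integral_cos]
    norm_num
  | succ k hk ih =>
    rw [step, ih, bernoulliKernelDeriv_succ_zero, if_neg (by omega : k ≠ 0)]
    field_simp
    ring

theorem sub_sin_mul_cot_eq_sum_cos (X : ℝ) {t : ℝ} (ht : sin t ≠ 0) (n : ℕ) :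
    (sin (X + 2 * n * t) - sin X) * cot t
      = ∑ j ∈ range n, (cos (X + 2 * (j + 1 : ℕ) * t) + cos (X + 2 * j * t)) := by
  have step : ∀ Y, (sin (Y + 2 * t) - sin Y) * cot t = cos (Y + 2 * t) + cos Y := fun Y => by
    rw [cot_eq_cos_div_sin, sin_add, cos_add, sin_two_mul, cos_two_mul]
    field_simp
    linear_combination (2 * cos t * sin Y) * sin_sq_add_cos_sq t
  have telescope := sum_range_sub (fun j : ℕ => sin (X + 2 * j * t)) n
  simp only [Nat.cast_zero, mul_zero, zero_mul, add_zero] at telescope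
  rw [← telescope, sum_mul]
  refine sum_congr rfl fun j _ => ?_
  rw [show X + 2 * (j + 1 : ℕ) * t = X + 2 * j * t + 2 * t by push_cast; ring]
  exact step _

theorem ae_sin_mul_ne_zero {c : ℝ} (hc : c ≠ 0) : ∀ᵐ u : ℝ, sin (c * u) ≠ 0 := by
  refine MeasureTheory.measure_mono_null (fun u hu => ?_)
    ((Set.countable_range fun i : ℤ => i * π / c).measure_zero _)
  obtain ⟨i, hi⟩ := sin_eq_zero_iff.1 (not_not.1 hu)
  exact ⟨i, by field_simp; linarith⟩

theorem integral_mul_sin_sub_sin_mul_cot {f : ℝ → ℝ} (hf : Continuous f) {a : ℝ} (ha : a ≠ 0)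
    (b : ℝ) (n : ℕ) :
    ∫ u in (0 : ℝ)..1, f u * (sin (2 * π * (a * n + b) * u) - sin (2 * π * b * u)) * cot (π * a * u)
      = ∑ j ∈ range n, ((∫ u in (0 : ℝ)..1, f u * cos (2 * π * (a * (j + 1 : ℕ) + b) * u))
          + ∫ u in (0 : ℝ)..1, f u * cos (2 * π * (a * j + b) * u)) := by
  have hπa : π * a ≠ 0 := mul_ne_zero pi_ne_zero ha
  have pointwise : ∀ᵐ u : ℝ, u ∈ Set.uIoc 0 1 →
      f u * (sin (2 * π * (a * n + b) * u) - sin (2 * π * b * u)) * cot (π * a * u)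
        = ∑ j ∈ range n, (f u * cos (2 * π * (a * (j + 1 : ℕ) + b) * u)
          + f u * cos (2 * π * (a * j + b) * u)) := by
    filter_upwards [ae_sin_mul_ne_zero hπa] with u hu _
    rw [mul_assoc, show 2 * π * (a * n + b) * u = 2 * π * b * u + 2 * n * (π * a * u) by ring,
      sub_sin_mul_cot_eq_sum_cos _ hu n, mul_sum]
    refine sum_congr rfl fun j _ => ?_
    rw [mul_add]
    congr 3 <;> ring
  rw [intervalIntegral.integral_congr_ae pointwise, intervalIntegral.integral_finsetSum]
  · exact sum_congr rfl fun j _ => intervalIntegral.integral_add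
      ((hf.mul (by fun_prop)).intervalIntegrable 0 1)
      ((hf.mul (by fun_prop)).intervalIntegrable 0 1)
  · exact fun j _ => ((hf.mul (by fun_prop)).add (hf.mul (by fun_prop))).intervalIntegrable 0 1

theorem sum_range_succ_add {R : Type*} [CommRing R] (g : ℕ → R) (n : ℕ) :
    ∑ j ∈ range n, (g (j + 1) + g j) = 2 * ∑ j ∈ Icc 1 n, g j + g 0 - g n := by
  induction n with
  | zero => simp
  | succ n ih =>
    rw [sum_range_succ, ih, sum_Icc_succ_top (by omega)]
    ring

theorem stmt_7_general (a b : ℤ) (ha : a ≠ 0) (hb : b ≠ 0) (n : ℕ)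
    (h : ∀ j : ℤ, 1 ≤ j → j ≤ n → a * j + b ≠ 0) (k : ℕ) (hk : 0 < k) :
    ∑ j ∈ Finset.Icc 1 n, (1 : ℝ) / (a * j + b) ^ (2 * k) =
      -(1 / (2 * (b : ℝ) ^ (2 * k))) + 1 / (2 * ((a : ℝ) * n + b) ^ (2 * k))
      - ((-1 : ℝ) ^ k * (2 * π) ^ (2 * k) / 2) *
          ∫ u in (0:ℝ)..1,
            (∑ j ∈ Finset.range (k + 1),
                (bernoulli (2 * j) : ℝ) * (2 - 2 ^ (2 * j)) * (1 - u) ^ (2 * k - 2 * j) /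
                  ((Nat.factorial (2 * j)) * (Nat.factorial (2 * k - 2 * j)))) *
              (Real.sin (2 * π * (a * n + b) * u) - Real.sin (2 * π * b * u)) *
              Real.cot (π * a * u) := by
  have m_ne_zero : ∀ j ≤ n, a * (j : ℤ) + b ≠ 0 := fun j hj => by
    rcases j.eq_zero_or_pos with rfl | hj0
    · simpa using hb
    · exact h j (by exact_mod_cast hj0) (by exact_mod_cast hj)
  have scaled_integral : ∀ j ≤ n, ((-1 : ℝ) ^ k * (2 * π) ^ (2 * k) / 2)
      * ∫ u in (0 : ℝ)..1, bernoulliKernel k u * cos (2 * π * (a * j + b) * u)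
      = -(1 / (2 * ((a : ℝ) * j + b) ^ (2 * k))) := fun j hj => by
    have hmR : (a : ℝ) * j + b ≠ 0 := by exact_mod_cast m_ne_zero j hj
    have hsin : sin (2 * π * ((a : ℝ) * j + b)) = 0 := by
      simpa [mul_comm, mul_left_comm] using sin_int_mul_pi (2 * (a * j + b))
    rw [integral_bernoulliKernel_mul_cos (by positivity) hsin hk, mul_pow (2 * π)]
    field_simp
    rw [← pow_add, Odd.neg_one_pow ⟨k, by ring⟩]
  change _ = _ + _ - _ * ∫ u in (0 : ℝ)..1, bernoulliKernel k u * _ * _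
  rw [integral_mul_sin_sub_sin_mul_cot (continuous_bernoulliKernel k) (by exact_mod_cast ha),
    mul_sum, sum_congr (s₁ := range n) rfl fun j hj => by
      rw [mul_add, scaled_integral (j + 1) (by grind), scaled_integral j (by grind)],
    sum_range_succ_add (fun j : ℕ => -(1 / (2 * ((a : ℝ) * j + b) ^ (2 * k))))]
  simp only [Nat.cast_zero, mul_zero, zero_add, sum_neg_distrib, one_div, mul_inv, ← mul_sum]
  ring

theorem stmt_7 (a b : ℤ) (ha : a ≠ 0) (hb : b ≠ 0) (n : ℕ) (hn : 0 < n)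
    (h : ∀ j : ℤ, 1 ≤ j → j ≤ n → a * j + b ≠ 0) (k : ℕ) (hk : 0 < k) :
    ∑ j ∈ Finset.Icc 1 n, (1 : ℝ) / (a * j + b) ^ (2 * k) =
      -(1 / (2 * (b : ℝ) ^ (2 * k))) + 1 / (2 * ((a : ℝ) * n + b) ^ (2 * k))
      - ((-1 : ℝ) ^ k * (2 * π) ^ (2 * k) / 2) *
          ∫ u in (0:ℝ)..1,
            (∑ j ∈ Finset.range (k + 1),
                (bernoulli (2 * j) : ℝ) * (2 - 2 ^ (2 * j)) * (1 - u) ^ (2 * k - 2 * j) /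
                  ((Nat.factorial (2 * j)) * (Nat.factorial (2 * k - 2 * j)))) *
              (Real.sin (2 * π * (a * n + b) * u) - Real.sin (2 * π * b * u)) *
              Real.cot (π * a * u) :=
  stmt_7_general a b ha hb n h k hk
end

section
/- Let a and b be nonzero integers, n a positive integer such that aj + b ≠ 0 for every integer j with 1 ≤ j ≤ n, and k a nonnegative integer. Writing HP_{r}(n) = ∑_{j=1}^{n} 1/(aj+b)^{r}, the following recursion holds: HP_{2k+1}(n) = -(1/(2b^{2k+1})) ∑_{j=0}^{k} (-1)^{j}(2πb)^{2j}/(2j+1)! + (1/(2(an+b)^{2k+1})) ∑_{j=0}^{k} (-1)^{j}(2π(an+b))^{2j}/(2j+1)! - ∑_{j=0}^{k-1} ((-1)^{k-j}(2π)^{2k-2j}/(2k+1-2j)!)·HP_{2j+1}(n) + ((-1)^{k}(2π)^{2k+1}/(2k+1)!) ∫_{0}^{1} (1-u)^{2k+1}·sin(π(an+2b)u)·sin(πanu)·cot(πau) du. -/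
/-!
Away from the countably many zeros of `sin (π a u)`, the product-to-sum identity
`sin t * ∑_{j<n} sin ((2j+1) t + φ) = sin (n t) * sin (n t + φ)` turns the integrand into
`∑_{j<n} (1-u)^(2k+1) (sin (2π x_{j+1} u) + sin (2π x_j u)) / 2` with `x_j = a j + b`.
Each `∫₀¹ (1-u)^(2k+1) sin (2π x u) du` is, up to a constant, the integral remainder of
Taylor's formula for `sin` at `2π x`; for integer `x` the sine vanishes there, so the integral
is a truncated series of `sin y / y` at `y = 2π x` divided by `x^(2k+1)`. Expanded in powers
of `1/x` and summed over `j`, this gives the sums `HP_{2j+1}(n)`, and the trapezoidal shape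
of the sum leaves the two endpoint terms `j = 0, n`.
-/

open Real Finset

section IntegrationByParts

variable (c : ℝ)

theorem hasDerivAt_one_sub_pow_succ (p : ℕ) (u : ℝ) :
    HasDerivAt (fun u : ℝ => (1 - u) ^ (p + 1)) (-((p + 1) * (1 - u) ^ p)) u := by
  simpa [mul_comm] using ((hasDerivAt_id u).const_sub 1).fun_pow (p + 1)

theorem mul_integral_one_sub_pow_succ_mul_sin (p : ℕ) :
    c * ∫ u in (0:ℝ)..1, (1 - u) ^ (p + 1) * sin (c * u)
      = 1 - (p + 1) * ∫ u in (0:ℝ)..1, (1 - u) ^ p * cos (c * u) := by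
  have h (u : ℝ) : HasDerivAt (fun u => -cos (c * u)) (c * sin (c * u)) u := by
    simpa [mul_comm] using (((hasDerivAt_id u).const_mul c).cos).fun_neg
  have := intervalIntegral.integral_mul_deriv_eq_deriv_mul (a := 0) (b := 1)
    (fun u _ => hasDerivAt_one_sub_pow_succ p u) (fun u _ => h u)
    (by apply Continuous.intervalIntegrable; fun_prop)
    (by apply Continuous.intervalIntegrable; fun_prop)
  rw [← intervalIntegral.integral_const_mul, ← intervalIntegral.integral_const_mul]
  simp only [mul_left_comm c]
  rw [this]
  simp [mul_assoc]

theorem mul_integral_one_sub_pow_succ_mul_cos (p : ℕ) :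
    c * ∫ u in (0:ℝ)..1, (1 - u) ^ (p + 1) * cos (c * u)
      = (p + 1) * ∫ u in (0:ℝ)..1, (1 - u) ^ p * sin (c * u) := by
  have h (u : ℝ) : HasDerivAt (fun u => sin (c * u)) (c * cos (c * u)) u := by
    simpa [mul_comm] using ((hasDerivAt_id u).const_mul c).sin
  have := intervalIntegral.integral_mul_deriv_eq_deriv_mul (a := 0) (b := 1)
    (fun u _ => hasDerivAt_one_sub_pow_succ p u) (fun u _ => h u)
    (by apply Continuous.intervalIntegrable; fun_prop)
    (by apply Continuous.intervalIntegrable; fun_prop)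
  rw [← intervalIntegral.integral_const_mul, ← intervalIntegral.integral_const_mul]
  simp only [mul_left_comm c]
  rw [this]
  simp [mul_assoc]

theorem mul_integral_cos_mul : c * ∫ u in (0:ℝ)..1, cos (c * u) = sin c := by
  have h (u : ℝ) : HasDerivAt (fun u => sin (c * u)) (c * cos (c * u)) u := by
    simpa [mul_comm] using ((hasDerivAt_id u).const_mul c).sin
  rw [← intervalIntegral.integral_const_mul,
    intervalIntegral.integral_eq_sub_of_hasDerivAt (fun u _ => h u)
      (by apply Continuous.intervalIntegrable; fun_prop)]
  simp

end IntegrationByParts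

noncomputable def sincTaylor (k : ℕ) (x : ℝ) : ℝ :=
  ∑ j ∈ range (k + 1), (-1 : ℝ) ^ j * x ^ (2 * j) / (Nat.factorial (2 * j + 1))

theorem sin_eq_mul_sincTaylor_sub_integral (k : ℕ) (c : ℝ) :
    sin c = c * sincTaylor k c - (-1) ^ k * c ^ (2 * k + 2) / (Nat.factorial (2 * k + 1)) *
      ∫ u in (0:ℝ)..1, (1 - u) ^ (2 * k + 1) * sin (c * u) := by
  induction k with
  | zero =>
    have hsin := mul_integral_one_sub_pow_succ_mul_sin c 0
    have hT : sincTaylor 0 c = 1 := by simp [sincTaylor]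
    norm_num [hT] at hsin ⊢
    linear_combination c * hsin - mul_integral_cos_mul c
  | succ k ih =>
    have hsin := mul_integral_one_sub_pow_succ_mul_sin c (2 * k + 2)
    have hcos := mul_integral_one_sub_pow_succ_mul_cos c (2 * k + 1)
    rw [show 2 * k + 1 + 1 = 2 * k + 2 from rfl] at hcos
    rw [sincTaylor, sum_range_succ, ← sincTaylor, show 2 * (k + 1) + 1 = 2 * k + 2 + 1 from rfl,
      Nat.factorial_succ, Nat.factorial_succ]
    push_cast at hsin hcos ⊢
    have hF : ((2 * k + 1).factorial : ℝ) ≠ 0 := by positivity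
    field_simp at ih ⊢
    linear_combination (2 * (k + 1) + 1 : ℝ) * (2 * k + 1 + 1) * ih
      + (-1) ^ (k + 1) * c ^ (2 * k + 2) * (c * hsin - (2 * k + 2 + 1) * hcos)

theorem mul_integral_one_sub_pow_mul_sin_two_pi_int (k : ℕ) (m : ℤ) :
    (-1) ^ k * (2 * π) ^ (2 * k + 1) / (Nat.factorial (2 * k + 1)) *
        ∫ u in (0:ℝ)..1, (1 - u) ^ (2 * k + 1) * sin (2 * π * m * u)
      = sincTaylor k (2 * π * m) / (m : ℝ) ^ (2 * k + 1) := by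
  rcases eq_or_ne (m : ℝ) 0 with hm | hm
  · simp [hm]
  have htaylor := sin_eq_mul_sincTaylor_sub_integral k (2 * π * m)
  rw [Real.sin_eq_zero_iff.2 ⟨2 * m, by push_cast; ring⟩] at htaylor
  have hF : ((2 * k + 1).factorial : ℝ) ≠ 0 := by positivity
  field_simp at htaylor ⊢
  apply mul_left_cancel₀ (mul_ne_zero (by positivity) hm : 2 * π * (m : ℝ) ≠ 0)
  linear_combination htaylor

theorem sincTaylor_two_pi_mul_div_pow (k : ℕ) (x : ℝ) :
    sincTaylor k (2 * π * x) / x ^ (2 * k + 1) =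
      ∑ i ∈ range k, (-1 : ℝ) ^ (k - i) * (2 * π) ^ (2 * k - 2 * i) /
          (Nat.factorial (2 * k + 1 - 2 * i)) * (1 / x ^ (2 * i + 1))
        + 1 / x ^ (2 * k + 1) := by
  rcases eq_or_ne x 0 with rfl | hx
  · simp [sincTaylor]
  calc sincTaylor k (2 * π * x) / x ^ (2 * k + 1)
      = ∑ i ∈ range (k + 1), (-1 : ℝ) ^ (k - i) * (2 * π) ^ (2 * k - 2 * i) /
          (Nat.factorial (2 * k + 1 - 2 * i)) * (1 / x ^ (2 * i + 1)) := by
        rw [sincTaylor, sum_div, ← sum_range_reflect]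
        refine sum_congr rfl fun i hi => ?_
        obtain ⟨d, rfl⟩ : ∃ d, k = i + d := ⟨k - i, by grind⟩
        rw [show i + d + 1 - 1 - i = d by omega, show i + d - i = d by omega,
          show 2 * (i + d) - 2 * i = 2 * d by omega,
          show 2 * (i + d) + 1 - 2 * i = 2 * d + 1 by omega]
        field_simp
        ring
    _ = _ := by simp [sum_range_succ]

theorem sin_mul_sum_sin_odd_mul_add (n : ℕ) (t φ : ℝ) :
    sin t * ∑ j ∈ range n, sin ((2 * j + 1) * t + φ) = sin (n * t) * sin (n * t + φ) := by
  induction n with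
  | zero => simp
  | succ n ih =>
    rw [sum_range_succ, mul_add, ih]
    set x := (n : ℝ) * t
    have h1 := two_mul_sin_mul_sin t (2 * x + t + φ)
    have h2 := two_mul_sin_mul_sin (x + t) (x + t + φ)
    have h3 := two_mul_sin_mul_sin x (x + φ)
    rw [show t - (2 * x + t + φ) = -(2 * x + φ) by ring, cos_neg] at h1
    rw [show x + t - (x + t + φ) = -φ by ring,
      show x + t + (x + t + φ) = t + (2 * x + t + φ) by ring] at h2
    rw [show x - (x + φ) = -φ by ring, show x + (x + φ) = 2 * x + φ by ring] at h3
    rw [show (2 * (n : ℝ) + 1) * t = 2 * x + t by ring,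
      show ((n + 1 : ℕ) : ℝ) * t = x + t by push_cast; ring]
    linear_combination (h1 - h2 + h3) / 2

theorem sin_mul_sin_mul_cot_eq_sum (n : ℕ) (t φ : ℝ) (ht : sin t ≠ 0) :
    sin (n * t + φ) * sin (n * t) * cot t
      = ∑ j ∈ range n, (sin (2 * (j + 1) * t + φ) + sin (2 * j * t + φ)) / 2 := by
  have hsum : ∀ j : ℕ, (sin (2 * (j + 1) * t + φ) + sin (2 * j * t + φ)) / 2
      = sin ((2 * j + 1) * t + φ) * cos t := fun j => by
    have h := two_mul_sin_mul_cos ((2 * j + 1) * t + φ) t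
    rw [show (2 * j + 1) * t + φ - t = 2 * j * t + φ by ring,
      show (2 * j + 1) * t + φ + t = 2 * (j + 1) * t + φ by ring] at h
    linear_combination -h / 2
  simp only [hsum, ← sum_mul]
  rw [cot_eq_cos_div_sin, mul_comm (sin _), ← sin_mul_sum_sin_odd_mul_add,
    mul_div_assoc', mul_assoc, mul_div_cancel_left₀ _ ht]

theorem countable_setOf_sin_mul_eq_zero {a : ℝ} (ha : a ≠ 0) :
    {u : ℝ | sin (a * u) = 0}.Countable := by
  refine (Set.countable_range fun m : ℤ => m * π / a).mono fun u hu => ?_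
  obtain ⟨m, hm⟩ := Real.sin_eq_zero_iff.1 hu
  exact ⟨m, by field_simp; linarith⟩

theorem integral_one_sub_pow_mul_sin_mul_sin_mul_cot (p n : ℕ) {a : ℝ} (ha : a ≠ 0)
    (b : ℝ) :
    ∫ u in (0:ℝ)..1,
        (1 - u) ^ p * sin (π * (a * n + 2 * b) * u) * sin (π * a * n * u) * cot (π * a * u)
      = ∑ j ∈ range n,
          ((∫ u in (0:ℝ)..1, (1 - u) ^ p * sin (2 * π * (a * (j + 1) + b) * u))
            + ∫ u in (0:ℝ)..1, (1 - u) ^ p * sin (2 * π * (a * j + b) * u)) / 2 := by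
  have hcount := countable_setOf_sin_mul_eq_zero (mul_ne_zero pi_ne_zero ha)
  rw [intervalIntegral.integral_congr_ae (g := fun u => ∑ j ∈ range n,
      ((1 - u) ^ p * sin (2 * π * (a * (j + 1) + b) * u)
        + (1 - u) ^ p * sin (2 * π * (a * j + b) * u)) / 2)]
  · rw [intervalIntegral.integral_finsetSum fun j _ => by
      apply Continuous.intervalIntegrable; fun_prop]
    refine sum_congr rfl fun j _ => ?_
    rw [intervalIntegral.integral_div, intervalIntegral.integral_add
      (by apply Continuous.intervalIntegrable; fun_prop)
      (by apply Continuous.intervalIntegrable; fun_prop)]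
  filter_upwards [hcount.ae_notMem MeasureTheory.volume] with u hu _
  have key := sin_mul_sin_mul_cot_eq_sum n (π * a * u) (2 * π * b * u) hu
  rw [show π * (a * n + 2 * b) * u = n * (π * a * u) + 2 * π * b * u by ring,
    show π * a * n * u = n * (π * a * u) by ring, mul_assoc, mul_assoc, ← mul_assoc (sin _),
    key, mul_sum]
  refine sum_congr rfl fun j _ => ?_
  rw [show 2 * (j + 1) * (π * a * u) + 2 * π * b * u = 2 * π * (a * (j + 1) + b) * u by ring,
    show 2 * j * (π * a * u) + 2 * π * b * u = 2 * π * (a * j + b) * u by ring]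
  ring

theorem sum_range_add_succ_div_two (g : ℕ → ℝ) (n : ℕ) :
    ∑ j ∈ range n, (g (j + 1) + g j) / 2 = ∑ j ∈ Icc 1 n, g j + (g 0 - g n) / 2 := by
  rw [← Ico_add_one_right_eq_Icc, sum_Ico_eq_sum_range, Nat.add_sub_cancel, ← sum_div,
    sum_add_distrib]
  simp only [add_comm 1]
  linarith [sum_range_succ' g n, sum_range_succ g n]

theorem stmt_8_general (a b : ℤ) (ha : a ≠ 0) (n : ℕ) (k : ℕ) :
    ∑ j ∈ Finset.Icc 1 n, (1 : ℝ) / (a * j + b) ^ (2 * k + 1) =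
      -(1 / (2 * (b : ℝ) ^ (2 * k + 1))) *
          ∑ j ∈ Finset.range (k + 1),
            (-1 : ℝ) ^ j * (2 * π * b) ^ (2 * j) / (Nat.factorial (2 * j + 1))
      + (1 / (2 * ((a : ℝ) * n + b) ^ (2 * k + 1))) *
          ∑ j ∈ Finset.range (k + 1),
            (-1 : ℝ) ^ j * (2 * π * ((a : ℝ) * n + b)) ^ (2 * j) /
              (Nat.factorial (2 * j + 1))
      - (∑ j ∈ Finset.range k,
          ((-1 : ℝ) ^ (k - j) * (2 * π) ^ (2 * k - 2 * j) /
              (Nat.factorial (2 * k + 1 - 2 * j))) *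
            ∑ i ∈ Finset.Icc 1 n, (1 : ℝ) / (a * i + b) ^ (2 * j + 1))
      + ((-1 : ℝ) ^ k * (2 * π) ^ (2 * k + 1) / (Nat.factorial (2 * k + 1))) *
          ∫ u in (0:ℝ)..1,
            (1 - u) ^ (2 * k + 1) * Real.sin (π * (a * n + 2 * b) * u) *
              Real.sin (π * a * n * u) * Real.cot (π * a * u) := by
  set g : ℕ → ℝ := fun j => sincTaylor k (2 * π * (a * j + b)) / (a * j + b) ^ (2 * k + 1)
  have hg (j : ℕ) : (-1 : ℝ) ^ k * (2 * π) ^ (2 * k + 1) / (Nat.factorial (2 * k + 1)) *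
      ∫ u in (0:ℝ)..1, (1 - u) ^ (2 * k + 1) * sin (2 * π * (a * j + b) * u) = g j := by
    simpa [g, mul_assoc] using mul_integral_one_sub_pow_mul_sin_two_pi_int k (a * j + b)
  have hintegral : (-1 : ℝ) ^ k * (2 * π) ^ (2 * k + 1) / (Nat.factorial (2 * k + 1)) *
      ∫ u in (0:ℝ)..1, (1 - u) ^ (2 * k + 1) * sin (π * (a * n + 2 * b) * u) *
        sin (π * a * n * u) * cot (π * a * u) = ∑ j ∈ Icc 1 n, g j + (g 0 - g n) / 2 := by
    rw [integral_one_sub_pow_mul_sin_mul_sin_mul_cot _ _ (Int.cast_ne_zero.2 ha), mul_sum,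
      ← sum_range_add_succ_div_two]
    refine sum_congr rfl fun j _ => ?_
    rw [mul_div_assoc', mul_add, hg j, ← hg (j + 1)]
    push_cast
    rfl
  have hsum : ∑ j ∈ Icc 1 n, g j = ∑ j ∈ Icc 1 n, (1 : ℝ) / (a * j + b) ^ (2 * k + 1) +
      ∑ i ∈ range k, (-1 : ℝ) ^ (k - i) * (2 * π) ^ (2 * k - 2 * i) /
          (Nat.factorial (2 * k + 1 - 2 * i)) *
        ∑ j ∈ Icc 1 n, (1 : ℝ) / (a * j + b) ^ (2 * i + 1) := by
    simp only [g, sincTaylor_two_pi_mul_div_pow, sum_add_distrib, mul_sum]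
    rw [sum_comm]
    ring
  rw [hintegral, hsum, ← sincTaylor, ← sincTaylor]
  simp only [g, Nat.cast_zero, mul_zero, zero_add]
  generalize ((a : ℝ) * n + b) ^ (2 * k + 1) = X
  generalize (b : ℝ) ^ (2 * k + 1) = B
  ring

theorem stmt_8 (a b : ℤ) (ha : a ≠ 0) (hb : b ≠ 0) (n : ℕ) (hn : 0 < n)
    (h : ∀ j : ℤ, 1 ≤ j → j ≤ n → a * j + b ≠ 0) (k : ℕ) :
    ∑ j ∈ Finset.Icc 1 n, (1 : ℝ) / (a * j + b) ^ (2 * k + 1) =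
      -(1 / (2 * (b : ℝ) ^ (2 * k + 1))) *
          ∑ j ∈ Finset.range (k + 1),
            (-1 : ℝ) ^ j * (2 * π * b) ^ (2 * j) / (Nat.factorial (2 * j + 1))
      + (1 / (2 * ((a : ℝ) * n + b) ^ (2 * k + 1))) *
          ∑ j ∈ Finset.range (k + 1),
            (-1 : ℝ) ^ j * (2 * π * ((a : ℝ) * n + b)) ^ (2 * j) /
              (Nat.factorial (2 * j + 1))
      - (∑ j ∈ Finset.range k,
          ((-1 : ℝ) ^ (k - j) * (2 * π) ^ (2 * k - 2 * j) /
              (Nat.factorial (2 * k + 1 - 2 * j))) *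
            ∑ i ∈ Finset.Icc 1 n, (1 : ℝ) / (a * i + b) ^ (2 * j + 1))
      + ((-1 : ℝ) ^ k * (2 * π) ^ (2 * k + 1) / (Nat.factorial (2 * k + 1))) *
          ∫ u in (0:ℝ)..1,
            (1 - u) ^ (2 * k + 1) * Real.sin (π * (a * n + 2 * b) * u) *
              Real.sin (π * a * n * u) * Real.cot (π * a * u) :=
  stmt_8_general a b ha n k
end

section
/- For every real number u and every real number x with 0 < |x| < π, the series ∑_{k=0}^{∞} (-1)^{k} [ ∑_{j=0}^{k} B_{2j}(2-2^{2j})(1-u)^{2k+1-2j}/((2j)!(2k+1-2j)!) ] x^{2k+1} converges and its sum equals x·sin(x(1-u))/sin(x). Equivalently, the (2k+1)-st Taylor coefficient at 0 of f(x) = x·sin(x(1-u))/sin(x) is (-1)^{k} ∑_{j=0}^{k} B_{2j}(2-2^{2j})(1-u)^{2k+1-2j}/((2j)!(2k+1-2j)!). -/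
/-!
Over `ℂ`, the identity `B(t) (eᵗ - 1) = t` for the Bernoulli generating function, taken at
`t = ix` and `t = 2ix`, gives the formal identity `(2 B(ix) - B(2ix)) sin x = x`; hence
`x / sin x = ∑ (-1)ʲ B₂ⱼ (2 - 2²ʲ) x²ʲ / (2j)!`. Since `|B₂ⱼ| (2π)²ʲ / (2j)! = 2 ζ(2j) ≤ π² / 3`
for `j ≥ 1`, this series converges absolutely for `|x| < π`. Its Cauchy product with the sine
series at `x (1 - u)` is the claimed series: `x / sin x` is even and `sin` is odd, so only odd
powers of `x` occur.
-/

open Real Finset PowerSeries Nat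

theorem Finset.sum_range_two_mul_of_odd_eq_zero {M : Type*} [AddCommMonoid M] {f : ℕ → M}
    (hf : ∀ p, Odd p → f p = 0) (n : ℕ) :
    ∑ p ∈ range (2 * n), f p = ∑ j ∈ range n, f (2 * j) := by
  induction n with
  | zero => simp
  | succ n ih =>
    rw [mul_add_one, sum_range_succ, sum_range_succ, sum_range_succ, ih,
      hf _ (odd_two_mul_add_one n), add_zero]

theorem hasSum_two_mul_add_one_iff_of_even_eq_zero {M : Type*} [AddCommMonoid M]
    [TopologicalSpace M] {f : ℕ → M} (hf : ∀ k, f (2 * k) = 0) {a : M} :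
    HasSum (fun k => f (2 * k + 1)) a ↔ HasSum f a := by
  refine (Function.Injective.hasSum_iff (f := f) (g := fun k => 2 * k + 1)
    (fun _ _ h => by simpa using h) fun n hn => ?_)
  obtain ⟨k, rfl | rfl⟩ := Nat.even_or_odd' n
  · exact hf k
  · exact absurd ⟨k, rfl⟩ hn

namespace PowerSeries

theorem coeff_rescale_mul_pow {R : Type*} [CommSemiring R] (f : R⟦X⟧) (a x : R) (n : ℕ) :
    coeff n (rescale a f) * x ^ n = coeff n f * (a * x) ^ n := by
  rw [coeff_rescale, mul_pow]; ring

theorem coeff_two_mul_mul_eq_zero {R : Type*} [CommSemiring R] {f g : R⟦X⟧}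
    (hf : ∀ p, Odd p → coeff p f = 0) (hg : ∀ q, Even q → coeff q g = 0) (k : ℕ) :
    coeff (2 * k) (f * g) = 0 := by
  rw [coeff_mul]
  refine sum_eq_zero fun pq hpq => ?_
  rcases Nat.even_or_odd pq.1 with hp | hp
  · rw [HasAntidiagonal.mem_antidiagonal] at hpq
    rw [hg _ ((Nat.even_add.mp (hpq ▸ even_two_mul k)).mp hp), mul_zero]
  · rw [hf _ hp, zero_mul]

theorem coeff_two_mul_add_one_mul {R : Type*} [CommSemiring R] {f : R⟦X⟧}
    (hf : ∀ p, Odd p → coeff p f = 0) (g : R⟦X⟧) (k : ℕ) :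
    coeff (2 * k + 1) (f * g) =
      ∑ j ∈ range (k + 1), coeff (2 * j) f * coeff (2 * k + 1 - 2 * j) g := by
  rw [coeff_mul, Nat.sum_antidiagonal_eq_sum_range_succ_mk, Nat.succ_eq_add_one,
    show 2 * k + 1 + 1 = 2 * (k + 1) by ring,
    sum_range_two_mul_of_odd_eq_zero fun p hp => by rw [hf p hp, zero_mul]]

theorem hasSum_coeff_mul_mul_pow {R : Type*} [NormedCommRing R] [CompleteSpace R] {f g : R⟦X⟧}
    {x : R} (hf : Summable fun n => ‖coeff n f * x ^ n‖)
    (hg : Summable fun n => ‖coeff n g * x ^ n‖) :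
    HasSum (fun n => coeff n (f * g) * x ^ n)
      ((∑' n, coeff n f * x ^ n) * ∑' n, coeff n g * x ^ n) := by
  have hcauchy : (fun n => coeff n (f * g) * x ^ n) = fun n =>
      ∑ pq ∈ antidiagonal n, (coeff pq.1 f * x ^ pq.1) * (coeff pq.2 g * x ^ pq.2) := by
    ext n
    rw [coeff_mul, sum_mul]
    refine sum_congr rfl fun pq hpq => ?_
    rw [← HasAntidiagonal.mem_antidiagonal.mp hpq, pow_add]
    ring
  rw [hcauchy, tsum_mul_tsum_eq_tsum_sum_antidiagonal_of_summable_norm hf hg]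
  exact (summable_norm_sum_mul_antidiagonal_of_summable_norm hf hg).of_norm.hasSum

theorem hasSum_coeff_X_mul_pow {R : Type*} [Semiring R] [TopologicalSpace R] (x : R) :
    HasSum (fun n => coeff n (X : R⟦X⟧) * x ^ n) x := by
  convert hasSum_single (f := fun n => coeff n (X : R⟦X⟧) * x ^ n) 1
    fun n hn => by rw [coeff_X, if_neg hn, zero_mul]
  rw [coeff_X, if_pos rfl, one_mul, pow_one]

section sin

variable {K : Type*} [Field K] [CharZero K]

theorem coeff_sin_two_mul (k : ℕ) : coeff (2 * k) (PowerSeries.sin K) = 0 := by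
  rw [PowerSeries.sin, coeff_mk, if_pos (even_two_mul k)]

theorem coeff_sin_two_mul_add_one (k : ℕ) :
    coeff (2 * k + 1) (PowerSeries.sin K) = (-1) ^ k / (2 * k + 1)! := by
  rw [PowerSeries.sin, coeff_mk, if_neg (Nat.not_even_iff_odd.mpr (odd_two_mul_add_one k)),
    show (2 * k + 1) / 2 = k by omega, eq_ratCast]
  push_cast
  rfl

end sin

theorem summable_norm_coeff_sin_mul_pow (x : ℝ) :
    Summable fun q => ‖coeff q (PowerSeries.sin ℝ) * x ^ q‖ := by
  refine .of_nonneg_of_le (fun _ => norm_nonneg _) (fun q => ?_)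
    (Real.summable_pow_div_factorial |x|)
  rw [norm_mul, norm_pow, Real.norm_eq_abs, Real.norm_eq_abs, div_eq_inv_mul]
  gcongr
  obtain ⟨k, rfl | rfl⟩ := Nat.even_or_odd' q
  · rw [coeff_sin_two_mul, abs_zero]
    positivity
  · rw [coeff_sin_two_mul_add_one, abs_div, abs_pow, abs_neg, abs_one, one_pow, Nat.abs_cast,
      one_div]

theorem hasSum_coeff_sin_mul_pow (x : ℝ) :
    HasSum (fun q => coeff q (PowerSeries.sin ℝ) * x ^ q) (Real.sin x) := by
  rw [← hasSum_two_mul_add_one_iff_of_even_eq_zero fun k => by rw [coeff_sin_two_mul, zero_mul]]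
  convert Real.hasSum_sin x using 2 with k
  rw [coeff_sin_two_mul_add_one]
  ring

open Complex in
theorem C_two_mul_I_mul_sin :
    C (2 * I) * PowerSeries.sin ℂ =
      rescale I (PowerSeries.exp ℂ) - rescale (-I) (PowerSeries.exp ℂ) := by
  ext n
  rw [coeff_C_mul, map_sub, coeff_rescale, coeff_rescale, coeff_exp, eq_ratCast, neg_pow]
  obtain ⟨k, rfl | rfl⟩ := Nat.even_or_odd' n
  · rw [coeff_sin_two_mul, (even_two_mul k).neg_one_pow]
    ring
  · rw [coeff_sin_two_mul_add_one, (odd_two_mul_add_one k).neg_one_pow, pow_succ, pow_mul, I_sq]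
    push_cast
    ring

open Complex in
theorem two_mul_rescale_I_bernoulliPowerSeries_sub_mul_sin :
    (2 * rescale I (bernoulliPowerSeries ℂ) - rescale (2 * I) (bernoulliPowerSeries ℂ)) *
      PowerSeries.sin ℂ = X := by
  have hB₁ := congrArg (rescale I) (bernoulliPowerSeries_mul_exp_sub_one ℂ)
  have hB₂ := congrArg (rescale (2 * I)) (bernoulliPowerSeries_mul_exp_sub_one ℂ)
  simp only [map_mul, map_sub, map_one, rescale_X, map_ofNat] at hB₁ hB₂
  have he : rescale I (PowerSeries.exp ℂ) * rescale (-I) (PowerSeries.exp ℂ) = 1 := by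
    rw [exp_mul_exp_eq_exp_add, add_neg_cancel, rescale_zero, RingHom.comp_apply,
      constantCoeff_exp, map_one]
  have he₂ : rescale I (PowerSeries.exp ℂ) * rescale I (PowerSeries.exp ℂ) =
      rescale (2 * I) (PowerSeries.exp ℂ) := by
    rw [exp_mul_exp_eq_exp_add, two_mul]
  have hsin := C_two_mul_I_mul_sin
  have hC : C (2 * I) = 2 * C I := by rw [map_mul, map_ofNat]
  refine mul_left_cancel₀ (a := C (2 * I)) (by simp) ?_
  set b₁ := rescale I (bernoulliPowerSeries ℂ)
  set b₂ := rescale (2 * I) (bernoulliPowerSeries ℂ)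
  set e := rescale I (PowerSeries.exp ℂ)
  set e' := rescale (-I) (PowerSeries.exp ℂ)
  linear_combination (2 * b₁ - b₂) * hsin + (2 + 2 * e') * hB₁ - e' * hB₂
    + (b₂ * e - 2 * b₁) * he - b₂ * e' * he₂ - X * hC

end PowerSeries

theorem bernoulli_mul_two_sub_two_pow_of_odd {p : ℕ} (hp : Odd p) :
    bernoulli p * (2 - 2 ^ p) = 0 := by
  rcases eq_or_ne p 1 with rfl | hp₁
  · norm_num
  · obtain ⟨m, rfl⟩ := hp
    rw [bernoulli_eq_bernoulli'_of_ne_one hp₁, bernoulli'_eq_zero_of_odd (odd_two_mul_add_one m)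
      (by omega), zero_mul]

theorem abs_bernoulli_two_mul_mul_two_pi_pow_div_factorial_le (k : ℕ) :
    |(bernoulli (2 * k) : ℝ)| * (2 * π) ^ (2 * k) / (2 * k)! ≤ π ^ 2 / 3 := by
  rcases Nat.eq_zero_or_pos k with rfl | hk
  · norm_num
    nlinarith [pi_gt_three]
  have hζ := hasSum_zeta_nat hk.ne'
  set ζ := (-1 : ℝ) ^ (k + 1) * 2 ^ (2 * k - 1) * π ^ (2 * k) * bernoulli (2 * k) / (2 * k)!
  have hζ_le : ζ ≤ π ^ 2 / 6 := by
    refine hasSum_le (fun n => ?_) hζ hasSum_zeta_two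
    rcases Nat.eq_zero_or_pos n with rfl | hn
    · simp [hk.ne']
    · gcongr
      · exact_mod_cast hn
      · omega
  have hζ_abs : |ζ| = |(bernoulli (2 * k) : ℝ)| * (2 * π) ^ (2 * k) / (2 * k)! / 2 := by
    obtain ⟨m, rfl⟩ := Nat.exists_eq_add_of_le' hk
    simp only [ζ, abs_div, abs_mul, abs_pow, abs_neg, abs_one, one_pow, abs_two,
      abs_of_pos pi_pos, Nat.abs_cast, mul_pow]
    rw [show 2 * (m + 1) - 1 = 2 * m + 1 by omega, show 2 * (m + 1) = 2 * m + 1 + 1 by ring,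
      pow_succ (2 : ℝ) (2 * m + 1)]
    ring
  have := le_abs_self ζ
  rw [abs_of_nonneg (hζ.nonneg fun n => by positivity)] at hζ_abs
  linarith

noncomputable def xDivSinSeries : ℝ⟦X⟧ :=
  mk fun p => (-1) ^ (p / 2) * bernoulli p * (2 - 2 ^ p) / p !

theorem coeff_xDivSinSeries_of_odd {p : ℕ} (hp : Odd p) : coeff p xDivSinSeries = 0 := by
  have h := congrArg (Rat.cast : ℚ → ℝ) (bernoulli_mul_two_sub_two_pow_of_odd hp)
  push_cast at h
  rw [xDivSinSeries, coeff_mk, mul_assoc, h, mul_zero, zero_div]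

theorem coeff_xDivSinSeries_two_mul (j : ℕ) :
    coeff (2 * j) xDivSinSeries =
      (-1) ^ j * bernoulli (2 * j) * (2 - 2 ^ (2 * j)) / (2 * j)! := by
  rw [xDivSinSeries, coeff_mk, Nat.mul_div_cancel_left j two_pos]

theorem abs_coeff_xDivSinSeries_mul_pi_pow_le (p : ℕ) :
    |coeff p xDivSinSeries| * π ^ p ≤ π ^ 2 / 3 := by
  obtain ⟨k, rfl | rfl⟩ := Nat.even_or_odd' p
  swap
  · rw [coeff_xDivSinSeries_of_odd (odd_two_mul_add_one k), abs_zero, zero_mul]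
    positivity
  have h_two_pow : |2 - (2 : ℝ) ^ (2 * k)| ≤ 2 ^ (2 * k) := by
    rw [abs_le]
    constructor <;> nlinarith [one_le_pow₀ (M₀ := ℝ) one_le_two (n := 2 * k)]
  calc |coeff (2 * k) xDivSinSeries| * π ^ (2 * k)
      = |(bernoulli (2 * k) : ℝ)| * |2 - (2 : ℝ) ^ (2 * k)| * π ^ (2 * k) / (2 * k)! := by
        rw [coeff_xDivSinSeries_two_mul, abs_div, abs_mul, abs_mul, abs_pow, abs_neg, abs_one,
          one_pow, one_mul, Nat.abs_cast]
        ring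
    _ ≤ |(bernoulli (2 * k) : ℝ)| * 2 ^ (2 * k) * π ^ (2 * k) / (2 * k)! := by gcongr
    _ = |(bernoulli (2 * k) : ℝ)| * (2 * π) ^ (2 * k) / (2 * k)! := by ring
    _ ≤ π ^ 2 / 3 := abs_bernoulli_two_mul_mul_two_pi_pow_div_factorial_le k

open Complex in
theorem map_ofReal_xDivSinSeries :
    map ofRealHom xDivSinSeries =
      2 * rescale I (bernoulliPowerSeries ℂ) - rescale (2 * I) (bernoulliPowerSeries ℂ) := by
  ext p
  rw [coeff_map, ofRealHom_eq_coe, map_sub, ← map_ofNat C 2, coeff_C_mul, coeff_rescale,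
    coeff_rescale, bernoulliPowerSeries, coeff_mk, eq_ratCast]
  obtain ⟨k, rfl | rfl⟩ := Nat.even_or_odd' p
  · rw [coeff_xDivSinSeries_two_mul, mul_pow, pow_mul I, I_sq]
    push_cast
    ring
  · have h := congrArg (Rat.cast : ℚ → ℂ)
      (bernoulli_mul_two_sub_two_pow_of_odd (odd_two_mul_add_one k))
    push_cast at h
    rw [coeff_xDivSinSeries_of_odd (odd_two_mul_add_one k), ofReal_zero]
    push_cast
    linear_combination (-(I ^ (2 * k + 1)) / (2 * k + 1)!) * h

theorem xDivSinSeries_mul_sin : xDivSinSeries * PowerSeries.sin ℝ = X :=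
  map_injective Complex.ofRealHom Complex.ofReal_injective <| by
    rw [map_mul, map_ofReal_xDivSinSeries, map_sin, map_X,
      two_mul_rescale_I_bernoulliPowerSeries_sub_mul_sin]

theorem summable_norm_coeff_xDivSinSeries_mul_pow {x : ℝ} (hx : |x| < π) :
    Summable fun p => ‖coeff p xDivSinSeries * x ^ p‖ := by
  have hr : |x| / π < 1 := (div_lt_one pi_pos).mpr hx
  refine .of_nonneg_of_le (fun _ => norm_nonneg _) (fun p => ?_)
    ((summable_geometric_of_lt_one (by positivity) hr).mul_left (π ^ 2 / 3))
  calc ‖coeff p xDivSinSeries * x ^ p‖ = |coeff p xDivSinSeries| * π ^ p * (|x| / π) ^ p := by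
        rw [norm_mul, norm_pow, Real.norm_eq_abs, Real.norm_eq_abs, div_pow,
          mul_assoc, mul_div_cancel₀ _ (pow_pos pi_pos p).ne']
    _ ≤ π ^ 2 / 3 * (|x| / π) ^ p := by
        gcongr
        exact abs_coeff_xDivSinSeries_mul_pi_pow_le p

theorem hasSum_coeff_xDivSinSeries_mul_pow {x : ℝ} (hx₀ : x ≠ 0) (hx : |x| < π) :
    HasSum (fun p => coeff p xDivSinSeries * x ^ p) (x / Real.sin x) := by
  have hf := summable_norm_coeff_xDivSinSeries_mul_pow hx
  have hsin : Real.sin x ≠ 0 := by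
    obtain ⟨hl, hr⟩ := abs_lt.mp hx
    rwa [Ne, Real.sin_eq_zero_iff_of_lt_of_lt hl hr]
  have hX := hasSum_coeff_mul_mul_pow hf (summable_norm_coeff_sin_mul_pow x)
  rw [xDivSinSeries_mul_sin, (hasSum_coeff_sin_mul_pow x).tsum_eq] at hX
  rw [← eq_div_of_mul_eq hsin ((hasSum_coeff_X_mul_pow x).unique hX).symm]
  exact hf.of_norm.hasSum

theorem coeff_two_mul_xDivSinSeries_mul_rescale_sin (a : ℝ) (k : ℕ) :
    coeff (2 * k) (xDivSinSeries * rescale a (PowerSeries.sin ℝ)) = 0 := by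
  refine coeff_two_mul_mul_eq_zero (fun _ => coeff_xDivSinSeries_of_odd) (fun q hq => ?_) k
  obtain ⟨j, rfl⟩ := hq.two_dvd
  rw [coeff_rescale, coeff_sin_two_mul, mul_zero]

theorem coeff_two_mul_add_one_xDivSinSeries_mul_rescale_sin (a : ℝ) (k : ℕ) :
    coeff (2 * k + 1) (xDivSinSeries * rescale a (PowerSeries.sin ℝ)) =
      (-1) ^ k * ∑ j ∈ range (k + 1), (bernoulli (2 * j) : ℝ) * (2 - 2 ^ (2 * j)) *
        a ^ (2 * k + 1 - 2 * j) / ((2 * j)! * (2 * k + 1 - 2 * j)!) := by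
  rw [coeff_two_mul_add_one_mul fun _ => coeff_xDivSinSeries_of_odd, mul_sum]
  refine sum_congr rfl fun j hj => ?_
  obtain ⟨m, rfl⟩ := Nat.exists_eq_add_of_le (Nat.lt_succ_iff.mp (mem_range.mp hj))
  rw [show 2 * (j + m) + 1 - 2 * j = 2 * m + 1 by omega, coeff_rescale,
    coeff_xDivSinSeries_two_mul, coeff_sin_two_mul_add_one, pow_add]
  field_simp
  ring

theorem stmt_12 (u x : ℝ) (h1 : 0 < |x|) (h2 : |x| < π) :
    HasSum
      (fun k : ℕ => (-1 : ℝ) ^ k *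
        (∑ j ∈ Finset.range (k + 1),
          (bernoulli (2 * j) : ℝ) * (2 - 2 ^ (2 * j)) * (1 - u) ^ (2 * k + 1 - 2 * j) /
            ((Nat.factorial (2 * j)) * (Nat.factorial (2 * k + 1 - 2 * j)))) *
        x ^ (2 * k + 1))
      (x * Real.sin (x * (1 - u)) / Real.sin x) := by
  have hsin := hasSum_coeff_sin_mul_pow ((1 - u) * x)
  have hg := summable_norm_coeff_sin_mul_pow ((1 - u) * x)
  simp only [← coeff_rescale_mul_pow] at hsin hg
  have hprod := hasSum_coeff_mul_mul_pow (summable_norm_coeff_xDivSinSeries_mul_pow h2) hg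
  rw [(hasSum_coeff_xDivSinSeries_mul_pow (abs_pos.mp h1) h2).tsum_eq, hsin.tsum_eq,
    ← hasSum_two_mul_add_one_iff_of_even_eq_zero fun k => by
      rw [coeff_two_mul_xDivSinSeries_mul_rescale_sin, zero_mul]] at hprod
  have hval : x / Real.sin x * Real.sin ((1 - u) * x) =
      x * Real.sin (x * (1 - u)) / Real.sin x := by
    rw [mul_comm (1 - u) x]
    ring
  simpa only [coeff_two_mul_add_one_xDivSinSeries_mul_rescale_sin, hval] using hprod
end

section
/- Let a and b be nonzero integers, n a positive integer such that aj + b ≠ 0 for every integer j with 1 ≤ j ≤ n, m a nonzero complex number, and k a positive integer. Writing HP_{r}(n) = ∑_{j=1}^{n} 1/(aj+b)^{r}, one has ∑_{j=1}^{n} (1/(aj+b)^{2k})·sin(2π(aj+b)/m) = -(1/(2b^{2k}))( sin(2πb/m) - ∑_{j=0}^{k-1} (-1)^{j}(2πb/m)^{2j+1}/(2j+1)! ) + (1/(2(an+b)^{2k}))( sin(2π(an+b)/m) - ∑_{j=0}^{k-1} (-1)^{j}(2π(an+b)/m)^{2j+1}/(2j+1)! ) - ∑_{j=0}^{k-1}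 ((-1)^{k-j}(2π/m)^{2k-1-2j}/(2k-1-2j)!)·HP_{2j+1}(n) - ((-1)^{k}(2π/m)^{2k}/(2(2k-1)!)) ∫_{0}^{1} (1-u)^{2k-1}·( cos(2π(an+b)u/m) - cos(2πbu/m) )·cot(πau/m) du. -/
/-!
Expand `sin (2π c / m)` by Taylor's formula of order `2k` with integral remainder
`∫₀¹ (1 - u) ^ (2k - 1) sin (2π c u / m) du`. After division by `c ^ (2k)` the Taylor polynomial
contributes the harmonic sums `HP_{2j+1}(n)`. Summed over `c = a j + b`, the remainders involve
`∑ⱼ sin (θ + 2 j z)` with `θ = 2π b u / m`, `z = π a u / m`, and multiplying by `2 sin z` telescopes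
this sum into a difference of cosines; dividing back by `sin z`, legitimate off a countable set of
`u`, produces the cotangent integral.
-/

open Real Complex intervalIntegral Finset

noncomputable def sinMoment (x : ℂ) (n : ℕ) : ℂ :=
  ∫ u in (0:ℝ)..1, (1 - (u : ℂ)) ^ n * Complex.sin (x * u)

noncomputable def cosMoment (x : ℂ) (n : ℕ) : ℂ :=
  ∫ u in (0:ℝ)..1, (1 - (u : ℂ)) ^ n * Complex.cos (x * u)

lemma hasDerivAt_comp_mul_ofReal {f f' : ℂ → ℂ} (hf : ∀ z, HasDerivAt f (f' z) z) (x : ℂ)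
    (u : ℝ) : HasDerivAt (fun u : ℝ ↦ f (x * u)) (x * f' (x * u)) u := by
  have := (hf (x * u)).comp (u : ℂ) ((hasDerivAt_id (u : ℂ)).const_mul x)
  simpa [mul_comm] using this.comp_ofReal

lemma hasDerivAt_one_sub_ofReal_pow (n : ℕ) (u : ℝ) :
    HasDerivAt (fun u : ℝ ↦ (1 - (u : ℂ)) ^ (n + 1)) (-((n + 1) * (1 - (u : ℂ)) ^ n)) u := by
  have := ((hasDerivAt_id (u : ℂ)).const_sub 1).pow (n + 1) |>.comp_ofReal
  simpa [mul_comm] using this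

lemma mul_integral_one_sub_pow_succ_mul_deriv {f f' : ℂ → ℂ} (hf : ∀ z, HasDerivAt f (f' z) z)
    (hf' : Continuous f') (x : ℂ) (n : ℕ) :
    x * ∫ u in (0:ℝ)..1, (1 - (u : ℂ)) ^ (n + 1) * f' (x * u) =
      (n + 1) * (∫ u in (0:ℝ)..1, (1 - (u : ℂ)) ^ n * f (x * u)) - f 0 := by
  have hcont : Continuous f := continuous_iff_continuousAt.2 fun z ↦ (hf z).continuousAt
  have key := integral_eq_sub_of_hasDerivAt (a := 0) (b := 1)
    (fun u _ ↦ (hasDerivAt_one_sub_ofReal_pow n u).mul (hasDerivAt_comp_mul_ofReal hf x u))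
    (Continuous.intervalIntegrable (by fun_prop) 0 1)
  rw [integral_add (Continuous.intervalIntegrable (by fun_prop) 0 1)
    (Continuous.intervalIntegrable (by fun_prop) 0 1)] at key
  simp only [neg_mul, mul_assoc, integral_neg, integral_const_mul, mul_left_comm _ x, Pi.mul_apply,
    ofReal_one, ofReal_zero, sub_self, sub_zero, zero_pow (Nat.succ_ne_zero n), one_pow, zero_mul,
    one_mul, mul_zero, zero_sub] at key
  linear_combination key

lemma mul_cosMoment_succ (x : ℂ) (n : ℕ) :
    x * cosMoment x (n + 1) = (n + 1) * sinMoment x n := by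
  simpa [cosMoment, sinMoment] using
    mul_integral_one_sub_pow_succ_mul_deriv (fun z ↦ hasDerivAt_sin z) continuous_cos x n

lemma sin_eq_mul_cosMoment_zero (x : ℂ) : Complex.sin x = x * cosMoment x 0 := by
  have := integral_eq_sub_of_hasDerivAt (a := 0) (b := 1)
    (fun u _ ↦ hasDerivAt_comp_mul_ofReal (fun z ↦ hasDerivAt_sin z) x u)
    (Continuous.intervalIntegrable (by fun_prop) 0 1)
  simpa [cosMoment, integral_const_mul] using this.symm

lemma cosMoment_eq_one_sub_mul_sinMoment_succ_div (x : ℂ) (n : ℕ) :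
    cosMoment x n = (1 - x * sinMoment x (n + 1)) / (n + 1) := by
  have := mul_integral_one_sub_pow_succ_mul_deriv (fun z ↦ hasDerivAt_cos z)
    continuous_sin.neg x n
  simp only [mul_neg, integral_neg, Complex.cos_zero] at this
  rw [eq_div_iff (by norm_cast), cosMoment, sinMoment]
  linear_combination -this

lemma sin_sub_taylor_eq_cosMoment (x : ℂ) (k : ℕ) :
    Complex.sin x - ∑ j ∈ range k, (-1 : ℂ) ^ j * x ^ (2 * j + 1) / (2 * j + 1).factorial =
      (-1) ^ k * x ^ (2 * k + 1) / (2 * k).factorial * cosMoment x (2 * k) := by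
  induction k with
  | zero => simp [sin_eq_mul_cosMoment_zero]
  | succ k ih =>
    have hB : x * cosMoment x (2 * k + 2) = (2 * k + 2) * sinMoment x (2 * k + 1) := by
      exact_mod_cast mul_cosMoment_succ x (2 * k + 1)
    have hF : ((2 * k).factorial : ℂ) ≠ 0 := Nat.cast_ne_zero.2 (Nat.factorial_ne_zero _)
    rw [sum_range_succ, ← sub_sub, ih, cosMoment_eq_one_sub_mul_sinMoment_succ_div,
      show 2 * (k + 1) = 2 * k + 2 by ring,
      show (-1 : ℂ) ^ (k + 1) * x ^ (2 * k + 2 + 1) / (2 * k + 2).factorial *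
          cosMoment x (2 * k + 2) =
        (-1) ^ (k + 1) * x ^ (2 * k + 2) / (2 * k + 2).factorial * (x * cosMoment x (2 * k + 2))
        by ring, hB, Nat.factorial_succ (2 * k + 1), Nat.factorial_succ (2 * k)]
    push_cast
    rw [show (2 * k + 1 + 1 : ℂ) = 2 * k + 2 by ring]
    field_simp
    ring

lemma sin_sub_taylor_eq_sinMoment (x : ℂ) {k : ℕ} (hk : 0 < k) :
    Complex.sin x - ∑ j ∈ range k, (-1 : ℂ) ^ j * x ^ (2 * j + 1) / (2 * j + 1).factorial =
      (-1) ^ k * x ^ (2 * k) / (2 * k - 1).factorial * sinMoment x (2 * k - 1) := by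
  obtain ⟨l, rfl⟩ : ∃ l, k = l + 1 := ⟨k - 1, by omega⟩
  have hF : ((2 * l).factorial : ℂ) ≠ 0 := Nat.cast_ne_zero.2 (Nat.factorial_ne_zero _)
  rw [sum_range_succ, ← sub_sub, sin_sub_taylor_eq_cosMoment,
    cosMoment_eq_one_sub_mul_sinMoment_succ_div, show 2 * (l + 1) - 1 = 2 * l + 1 by omega,
    Nat.factorial_succ]
  push_cast
  field_simp
  ring

lemma sin_mul_sub_taylor_div_pow (t : ℂ) {c : ℂ} (hc : c ≠ 0) {k : ℕ} (hk : 0 < k) :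
    (Complex.sin (t * c) -
        ∑ j ∈ range k, (-1 : ℂ) ^ j * (t * c) ^ (2 * j + 1) / (2 * j + 1).factorial) / c ^ (2 * k) =
      (-1) ^ k * t ^ (2 * k) / (2 * k - 1).factorial * sinMoment (t * c) (2 * k - 1) := by
  rw [sin_sub_taylor_eq_sinMoment _ hk, mul_pow]
  field_simp

lemma sum_taylor_sin_mul_div_pow (t : ℂ) {c : ℂ} (hc : c ≠ 0) (k : ℕ) :
    (∑ j ∈ range k, (-1 : ℂ) ^ j * (t * c) ^ (2 * j + 1) / (2 * j + 1).factorial) / c ^ (2 * k) =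
      -∑ i ∈ range k, (-1 : ℂ) ^ (k - i) * t ^ (2 * k - 1 - 2 * i) / (2 * k - 1 - 2 * i).factorial *
        (1 / c ^ (2 * i + 1)) := by
  rw [sum_div, ← sum_range_reflect, ← sum_neg_distrib]
  refine sum_congr rfl fun j hj ↦ ?_
  obtain ⟨i, rfl⟩ : ∃ i, k = i + j + 1 := ⟨k - 1 - j, by have := mem_range.1 hj; omega⟩
  rw [show i + j + 1 - 1 - j = i by omega, show i + j + 1 - j = i + 1 by omega,
    show 2 * (i + j + 1) - 1 - 2 * j = 2 * i + 1 by omega,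
    show 2 * (i + j + 1) = (2 * i + 1) + (2 * j + 1) by omega, mul_pow, pow_add]
  field_simp
  ring

lemma one_div_pow_mul_sin_mul_eq (t : ℂ) {c : ℂ} (hc : c ≠ 0) {k : ℕ} (hk : 0 < k) :
    1 / c ^ (2 * k) * Complex.sin (t * c) =
      -∑ i ∈ range k, (-1 : ℂ) ^ (k - i) * t ^ (2 * k - 1 - 2 * i) / (2 * k - 1 - 2 * i).factorial *
          (1 / c ^ (2 * i + 1)) +
        (-1) ^ k * t ^ (2 * k) / (2 * k - 1).factorial * sinMoment (t * c) (2 * k - 1) := by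
  rw [← sum_taylor_sin_mul_div_pow t hc, ← sin_mul_sub_taylor_div_pow t hc hk]
  ring

lemma two_mul_sin_mul_sum_sin (θ z : ℂ) (n : ℕ) :
    2 * Complex.sin z * ∑ j ∈ Icc 1 n, Complex.sin (θ + 2 * j * z) =
      Complex.cos (θ + z) - Complex.cos (θ + (2 * n + 1) * z) := by
  induction n with
  | zero => simp
  | succ n ih =>
    have e₁ : θ + (2 * n + 1) * z = θ + 2 * ((n + 1 : ℕ) : ℂ) * z - z := by push_cast; ring
    have e₂ : θ + (2 * ((n + 1 : ℕ) : ℂ) + 1) * z = θ + 2 * ((n + 1 : ℕ) : ℂ) * z + z := by ring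
    rw [sum_Icc_succ_top (by omega), mul_add, ih, e₁, e₂, Complex.cos_sub _ z,
      Complex.cos_add (θ + 2 * ((n + 1 : ℕ) : ℂ) * z) z]
    ring

lemma cos_sub_cos_mul_cot (θ z : ℂ) (hz : Complex.sin z ≠ 0) (n : ℕ) :
    (Complex.cos (θ + 2 * n * z) - Complex.cos θ) * Complex.cot z =
      Complex.sin (θ + 2 * n * z) - Complex.sin θ -
        2 * ∑ j ∈ Icc 1 n, Complex.sin (θ + 2 * j * z) := by
  have h := two_mul_sin_mul_sum_sin θ z n
  rw [show θ + (2 * n + 1) * z = θ + 2 * n * z + z by ring, Complex.cos_add, Complex.cos_add] at h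
  rw [Complex.cot_eq_cos_div_sin, ← mul_div_assoc, div_eq_iff hz]
  linear_combination h

lemma ae_sin_mul_ofReal_ne_zero {c : ℂ} (hc : c ≠ 0) :
    ∀ᵐ u : ℝ, Complex.sin (c * u) ≠ 0 := by
  have hzeros : {u : ℝ | Complex.sin (c * u) = 0} ⊆ Set.range fun q : ℤ ↦ (q * π / c).re := by
    intro u hu
    obtain ⟨q, hq⟩ := Complex.sin_eq_zero_iff.1 hu
    exact ⟨q, show ((q : ℂ) * π / c).re = u by
      rw [← hq, mul_div_cancel_left₀ _ hc, Complex.ofReal_re]⟩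
  exact ((Set.countable_range _).mono hzeros).ae_notMem _

lemma integral_one_sub_pow_mul_cos_sub_cos_mul_cot (t a b : ℂ) (hta : t * a ≠ 0) (n N : ℕ) :
    ∫ u in (0:ℝ)..1, (1 - (u : ℂ)) ^ N *
        (Complex.cos (t * (a * n + b) * u) - Complex.cos (t * b * u)) *
          Complex.cot (t * a / 2 * u) =
      sinMoment (t * (a * n + b)) N - sinMoment (t * b) N -
        2 * ∑ j ∈ Icc 1 n, sinMoment (t * (a * j + b)) N := by
  have hg : ∀ c : ℂ, IntervalIntegrable (fun u : ℝ ↦ (1 - (u : ℂ)) ^ N * Complex.sin (c * u))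
      MeasureTheory.volume 0 1 :=
    fun c ↦ Continuous.intervalIntegrable (by fun_prop) 0 1
  have hpt : ∀ (j : ℕ) (u : ℝ), t * b * u + 2 * j * (t * a / 2 * u) = t * (a * j + b) * u :=
    fun j u ↦ by ring
  have hcongr : ∀ᵐ u : ℝ, u ∈ Set.uIoc 0 1 → (1 - (u : ℂ)) ^ N *
        (Complex.cos (t * (a * n + b) * u) - Complex.cos (t * b * u)) *
          Complex.cot (t * a / 2 * u) =
      (1 - (u : ℂ)) ^ N * Complex.sin (t * (a * n + b) * u) -
        (1 - (u : ℂ)) ^ N * Complex.sin (t * b * u) -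
        2 * ∑ j ∈ Icc 1 n, (1 - (u : ℂ)) ^ N * Complex.sin (t * (a * j + b) * u) := by
    filter_upwards [ae_sin_mul_ofReal_ne_zero (div_ne_zero hta two_ne_zero)] with u hu _
    have h := cos_sub_cos_mul_cot (t * b * u) (t * a / 2 * u) hu n
    simp only [hpt] at h
    rw [mul_assoc, h, ← mul_sum]
    ring
  rw [integral_congr_ae hcongr, integral_sub ((hg _).sub (hg _))
      (Continuous.intervalIntegrable (by fun_prop) 0 1),
    integral_sub (hg _) (hg _), integral_const_mul, integral_finsetSum fun j _ ↦ hg _]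
  rfl

theorem stmt_17 (a b : ℤ) (ha : a ≠ 0) (hb : b ≠ 0) (n : ℕ) (hn : 0 < n)
    (h : ∀ j : ℤ, 1 ≤ j → j ≤ n → a * j + b ≠ 0) (m : ℂ) (hm : m ≠ 0)
    (k : ℕ) (hk : 0 < k) :
    ∑ j ∈ Finset.Icc 1 n,
        (1 : ℂ) / (a * j + b) ^ (2 * k) *
          Complex.sin (2 * π * ((a : ℂ) * j + b) / m) =
      -(1 / (2 * (b : ℂ) ^ (2 * k))) *
          (Complex.sin (2 * π * (b : ℂ) / m) -
            ∑ j ∈ Finset.range k,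
              (-1 : ℂ) ^ j * (2 * π * (b : ℂ) / m) ^ (2 * j + 1) /
                (Nat.factorial (2 * j + 1)))
      + (1 / (2 * ((a : ℂ) * n + b) ^ (2 * k))) *
          (Complex.sin (2 * π * ((a : ℂ) * n + b) / m) -
            ∑ j ∈ Finset.range k,
              (-1 : ℂ) ^ j * (2 * π * ((a : ℂ) * n + b) / m) ^ (2 * j + 1) /
                (Nat.factorial (2 * j + 1)))
      - (∑ j ∈ Finset.range k,
          ((-1 : ℂ) ^ (k - j) * (2 * π / m) ^ (2 * k - 1 - 2 * j) /
              (Nat.factorial (2 * k - 1 - 2 * j))) *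
            ∑ i ∈ Finset.Icc 1 n, (1 : ℂ) / (a * i + b) ^ (2 * j + 1))
      - ((-1 : ℂ) ^ k * (2 * π / m) ^ (2 * k) / (2 * (Nat.factorial (2 * k - 1)))) *
          ∫ u in (0:ℝ)..1,
            (1 - (u : ℂ)) ^ (2 * k - 1) *
              (Complex.cos (2 * π * ((a : ℂ) * n + b) * u / m)
                - Complex.cos (2 * π * (b : ℂ) * u / m)) *
              Complex.cot (π * (a : ℂ) * u / m) := by
  have hπm : (2 * π / m : ℂ) * a ≠ 0 :=
    mul_ne_zero (div_ne_zero (mul_ne_zero two_ne_zero (ofReal_ne_zero.2 pi_ne_zero)) hm)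
      (Int.cast_ne_zero.2 ha)
  have hc : ∀ j ∈ Icc 1 n, (a : ℂ) * j + b ≠ 0 := fun j hj ↦ by
    exact_mod_cast h j (by exact_mod_cast (mem_Icc.1 hj).1) (by exact_mod_cast (mem_Icc.1 hj).2)
  have hI : ∫ u in (0:ℝ)..1, (1 - (u : ℂ)) ^ (2 * k - 1) *
      (Complex.cos (2 * π * ((a : ℂ) * n + b) * u / m) - Complex.cos (2 * π * (b : ℂ) * u / m)) *
        Complex.cot (π * (a : ℂ) * u / m) =
      sinMoment (2 * π / m * (a * n + b)) (2 * k - 1) - sinMoment (2 * π / m * b) (2 * k - 1) -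
        2 * ∑ j ∈ Icc 1 n, sinMoment (2 * π / m * (a * j + b)) (2 * k - 1) := by
    rw [← integral_one_sub_pow_mul_cos_sub_cos_mul_cot _ _ _ hπm n (2 * k - 1)]
    congr 1; ext u; ring_nf
  simp only [show ∀ c : ℂ, 2 * π * c / m = 2 * π / m * c from fun c ↦ by ring]
  set t : ℂ := 2 * π / m
  have hbdry : ∀ c : ℂ, c ≠ 0 → 1 / (2 * c ^ (2 * k)) * (Complex.sin (t * c) -
      ∑ j ∈ range k, (-1 : ℂ) ^ j * (t * c) ^ (2 * j + 1) / (2 * j + 1).factorial) =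
      (-1) ^ k * t ^ (2 * k) / (2 * k - 1).factorial * sinMoment (t * c) (2 * k - 1) / 2 :=
    fun c hc ↦ by rw [← sin_mul_sub_taylor_div_pow t hc hk]; ring
  rw [sum_congr rfl fun j hj ↦ one_div_pow_mul_sin_mul_eq t (hc j hj) hk, neg_mul,
    hbdry _ (Int.cast_ne_zero.2 hb), hbdry _ (hc n (mem_Icc.2 ⟨hn, le_rfl⟩)), hI,
    sum_add_distrib, sum_neg_distrib, sum_comm]
  simp only [← mul_sum]
  ring
end
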